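/- Let λ₁: ℝ₊ → ℝ₊ be integrable with ‖λ₁‖₁ = 1 and m = ∫₀^∞ x λ₁(x) dx < ∞, let a_T ∈ (0,1) with T(1−a_T) → λ > 0, and define ψ₁^T = ∑_{k≥1} a_T^k λ₁^{*k}. Then for every z ∈ ℝ the Fourier transform of x ↦ ψ₁^T(Tx) converges: ∫₀^∞ ψ₁^T(Tx) e^{izx} dx → 1/(λ − izm) as T → ∞, which is the Fourier transform of x ↦ (1/m) e^{−(λ/m)x} on ℝ₊. -/

import Mathlib

/-!
Write `λ̂(u) = ∫₀^∞ λ₁(x) e^{iux} dx`. Convolution on `ℝ₊` becomes multiplication under `λ̂`, so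
the series defining `ψ₁^T` transforms into a geometric series in `a_T λ̂`, and the substitution
`x ↦ T x` gives the transform `a_T λ̂(z/T) / (T (1 - a_T λ̂(z/T)))`. Dominated convergence, with
`|e^{iθ} - 1| ≤ |θ|` and the first moment as dominating function, gives `T (λ̂(z/T) - 1) → izm`;
hence the denominator tends to `λ - izm` while the numerator tends to `1`.
-/

open MeasureTheory Filter

noncomputable def sconv (f g : ℝ → ℝ) : ℝ → ℝ :=
  fun t => ∫ s in (0:ℝ)..t, f s * g (t - s)

/-- `sconvPow f k` is the (k+1)-st scalar convolution power λ^{*(k+1)}. -/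
noncomputable def sconvPow (f : ℝ → ℝ) : ℕ → ℝ → ℝ
  | 0 => f
  | (k + 1) => sconv f (sconvPow f k)

open Set Complex Topology

/-- The one-sided Fourier transform `∫₀^∞ f(x) e^{iux} dx`, with the paper's sign convention
(unlike Mathlib's `𝓕`, no `-2π` in the exponent). -/
noncomputable def fourierIoi (f : ℝ → ℝ) (u : ℝ) : ℂ :=
  ∫ x in Ioi 0, (f x : ℂ) * cexp (I * u * x)

lemma norm_cexp_I_mul_ofReal_mul (u x : ℝ) : ‖cexp (I * u * x)‖ = 1 := by
  rw [mul_assoc, ← ofReal_mul, mul_comm]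
  exact norm_exp_ofReal_mul_I _

lemma MeasureTheory.IntegrableOn.ofReal_mul_cexp_I_mul {f : ℝ → ℝ} {s : Set ℝ}
    (hf : IntegrableOn f s) (u : ℝ) :
    IntegrableOn (fun x => (f x : ℂ) * cexp (I * u * x)) s := by
  refine hf.norm.mono' ((continuous_ofReal.comp_aestronglyMeasurable hf.aestronglyMeasurable).mul
    (by fun_prop : Continuous fun x : ℝ => cexp (I * u * x)).aestronglyMeasurable) ?_
  filter_upwards with x
  rw [norm_mul, norm_cexp_I_mul_ofReal_mul, mul_one, norm_real]

lemma fourierIoi_zero (f : ℝ → ℝ) : fourierIoi f 0 = ∫ x in Ioi 0, f x := by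
  simp only [fourierIoi, ofReal_zero, mul_zero, zero_mul, Complex.exp_zero, mul_one]
  exact integral_ofReal

lemma norm_fourierIoi_le {f : ℝ → ℝ} (hf : ∀ x, 0 ≤ x → 0 ≤ f x) (u : ℝ) :
    ‖fourierIoi f u‖ ≤ ∫ x in Ioi 0, f x :=
  (norm_integral_le_integral_norm _).trans_eq <| setIntegral_congr_fun measurableSet_Ioi
    fun x hx => by
      rw [norm_mul, norm_cexp_I_mul_ofReal_mul, mul_one, norm_real, Real.norm_of_nonneg
        (hf x (le_of_lt hx))]

lemma fourierIoi_comp_mul_left (g : ℝ → ℝ) {T : ℝ} (hT : 0 < T) (z : ℝ) :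
    fourierIoi (fun x => g (T * x)) z = T⁻¹ * fourierIoi g (z / T) := by
  have h := integral_comp_mul_left_Ioi (fun y => (g y : ℂ) * cexp (I * ↑(z / T) * y)) 0 hT
  rw [mul_zero] at h
  rw [fourierIoi, fourierIoi, ← real_smul, ← h]
  refine setIntegral_congr_fun measurableSet_Ioi fun x _ => ?_
  have hT' : (T : ℂ) ≠ 0 := by exact_mod_cast hT.ne'
  push_cast
  field_simp

lemma sconv_nonneg {f g : ℝ → ℝ} (hf : ∀ x, 0 ≤ x → 0 ≤ f x) (hg : ∀ x, 0 ≤ x → 0 ≤ g x)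
    {x : ℝ} (hx : 0 ≤ x) : 0 ≤ sconv f g x :=
  intervalIntegral.integral_nonneg hx fun s hs =>
    mul_nonneg (hf s hs.1) (hg (x - s) (sub_nonneg.2 hs.2))

lemma posConvolution_mul_eq_indicator_sconv (f g : ℝ → ℝ) :
    posConvolution f g (ContinuousLinearMap.mul ℝ ℝ) = (Ioi 0).indicator (sconv f g) := by
  simp only [posConvolution, ContinuousLinearMap.mul_apply']
  rfl

lemma integrableOn_sconv {f g : ℝ → ℝ} (hf : IntegrableOn f (Ioi 0)) (hg : IntegrableOn g (Ioi 0)) :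
    IntegrableOn (sconv f g) (Ioi 0) := by
  rw [← integrable_indicator_iff measurableSet_Ioi, ← posConvolution_mul_eq_indicator_sconv]
  exact integrable_posConvolution hf hg _

lemma fourierIoi_sconv {f g : ℝ → ℝ} (hf : IntegrableOn f (Ioi 0)) (hg : IntegrableOn g (Ioi 0))
    (u : ℝ) : fourierIoi (sconv f g) u = fourierIoi f u * fourierIoi g u := by
  have key := integral_posConvolution (hf.ofReal_mul_cexp_I_mul u) (hg.ofReal_mul_cexp_I_mul u)
    (ContinuousLinearMap.mul ℝ ℂ)
  simp only [ContinuousLinearMap.mul_apply'] at key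
  rw [fourierIoi, fourierIoi, fourierIoi, ← key]
  refine setIntegral_congr_fun measurableSet_Ioi fun x _ => ?_
  rw [sconv, ← intervalIntegral.integral_ofReal, ← intervalIntegral.integral_mul_const]
  refine intervalIntegral.integral_congr fun t _ => ?_
  have hsplit : cexp (I * u * x) = cexp (I * u * t) * cexp (I * u * ↑(x - t)) := by
    rw [← Complex.exp_add]; push_cast; ring_nf
  rw [hsplit]
  push_cast
  ring

lemma sconvPow_nonneg {f : ℝ → ℝ} (hf : ∀ x, 0 ≤ x → 0 ≤ f x) (k : ℕ) :
    ∀ x, 0 ≤ x → 0 ≤ sconvPow f k x := by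
  induction k with
  | zero => exact hf
  | succ k ih => exact fun x => sconv_nonneg hf ih

lemma integrableOn_sconvPow {f : ℝ → ℝ} (hf : IntegrableOn f (Ioi 0)) (k : ℕ) :
    IntegrableOn (sconvPow f k) (Ioi 0) := by
  induction k with
  | zero => exact hf
  | succ k ih => exact integrableOn_sconv hf ih

lemma fourierIoi_sconvPow {f : ℝ → ℝ} (hf : IntegrableOn f (Ioi 0)) (k : ℕ) (u : ℝ) :
    fourierIoi (sconvPow f k) u = fourierIoi f u ^ (k + 1) := by
  induction k with
  | zero => exact (pow_one _).symm
  | succ k ih =>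
    rw [sconvPow, fourierIoi_sconv hf (integrableOn_sconvPow hf k), ih, pow_succ' _ (k + 1)]

lemma integral_sconvPow {f : ℝ → ℝ} (hf : IntegrableOn f (Ioi 0)) (k : ℕ) :
    ∫ x in Ioi 0, sconvPow f k x = (∫ x in Ioi 0, f x) ^ (k + 1) := by
  have h := fourierIoi_sconvPow hf k 0
  rw [fourierIoi_zero, fourierIoi_zero] at h
  exact_mod_cast h

lemma fourierIoi_tsum_pow_mul_sconvPow {f : ℝ → ℝ} (hf0 : ∀ x, 0 ≤ x → 0 ≤ f x)
    (hf : IntegrableOn f (Ioi 0)) (hf1 : ∫ x in Ioi 0, f x = 1) {α : ℝ} (hα0 : 0 ≤ α)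
    (hα1 : α < 1) (u : ℝ) :
    fourierIoi (fun x => ∑' k : ℕ, α ^ (k + 1) * sconvPow f k x) u =
      α * fourierIoi f u / (1 - α * fourierIoi f u) := by
  set F : ℕ → ℝ → ℂ := fun k x => (α : ℂ) ^ (k + 1) * ((sconvPow f k x : ℂ) * cexp (I * u * x))
  have hF_int : ∀ k, IntegrableOn (F k) (Ioi 0) := fun k =>
    ((integrableOn_sconvPow hf k).ofReal_mul_cexp_I_mul u).const_mul _
  have hF_norm : ∀ k, ∫ x in Ioi 0, ‖F k x‖ = α ^ (k + 1) := by
    intro k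
    rw [setIntegral_congr_fun measurableSet_Ioi (g := fun x => α ^ (k + 1) * sconvPow f k x)
      fun x hx => ?_, integral_const_mul, integral_sconvPow hf, hf1, one_pow, mul_one]
    simp only [F, norm_mul, norm_pow, norm_real, norm_cexp_I_mul_ofReal_mul, mul_one,
      Real.norm_of_nonneg hα0, Real.norm_of_nonneg (sconvPow_nonneg hf0 k x (le_of_lt hx))]
  have hF_sum : Summable fun k => ∫ x in Ioi 0, ‖F k x‖ := by
    simpa only [hF_norm] using (summable_nat_add_iff 1).mpr (summable_geometric_of_lt_one hα0 hα1)
  have hratio : ‖(α : ℂ) * fourierIoi f u‖ < 1 := by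
    rw [norm_mul, norm_real, Real.norm_of_nonneg hα0]
    calc α * ‖fourierIoi f u‖ ≤ α * 1 := by
          gcongr; exact hf1 ▸ norm_fourierIoi_le hf0 u
      _ < 1 := by linarith
  calc fourierIoi (fun x => ∑' k : ℕ, α ^ (k + 1) * sconvPow f k x) u
      = ∫ x in Ioi 0, ∑' k, F k x := by
        refine setIntegral_congr_fun measurableSet_Ioi fun x _ => ?_
        rw [ofReal_tsum, ← tsum_mul_right]
        exact tsum_congr fun k => by push_cast; ring
    _ = ∑' k, ∫ x in Ioi 0, F k x := (integral_tsum_of_summable_integral_norm hF_int hF_sum).symm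
    _ = ∑' k : ℕ, ((α : ℂ) * fourierIoi f u) ^ (k + 1) := tsum_congr fun k => by
        rw [integral_const_mul, ← fourierIoi, fourierIoi_sconvPow hf, mul_pow]
    _ = α * fourierIoi f u / (1 - α * fourierIoi f u) := by
        simp_rw [pow_succ']
        rw [tsum_mul_left, tsum_geometric_of_norm_lt_one hratio, div_eq_mul_inv]

lemma tendsto_mul_cexp_div_sub_one (c : ℂ) :
    Tendsto (fun T : ℝ => (T : ℂ) * (cexp (c / T) - 1)) atTop (𝓝 c) := by
  have hd : HasDerivAt (fun s : ℝ => cexp (c * s)) c 0 := by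
    simpa using ((ofRealCLM.hasDerivAt (x := 0)).const_mul c).cexp
  rw [hasDerivAt_iff_tendsto_slope_zero] at hd
  refine (hd.comp (tendsto_inv_atTop_nhdsGT_zero.mono_right
    (nhdsWithin_mono _ fun x hx => ne_of_gt hx))).congr' ?_
  filter_upwards [eventually_ne_atTop 0] with T hT
  simp [div_eq_mul_inv]

lemma tendsto_mul_fourierIoi_div_sub_fourierIoi_zero {f : ℝ → ℝ} (hf : IntegrableOn f (Ioi 0))
    (hxf : IntegrableOn (fun x => x * f x) (Ioi 0)) (z : ℝ) :
    Tendsto (fun T : ℝ => (T : ℂ) * (fourierIoi f (z / T) - fourierIoi f 0)) atTop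
      (𝓝 (I * z * ∫ x in Ioi 0, x * f x)) := by
  have hrw : ∀ T : ℝ, (T : ℂ) * (fourierIoi f (z / T) - fourierIoi f 0) =
      ∫ x in Ioi 0, (f x : ℂ) * (T * (cexp (I * z * x / T) - 1)) := by
    intro T
    rw [fourierIoi, fourierIoi, ← integral_sub (hf.ofReal_mul_cexp_I_mul _)
      (hf.ofReal_mul_cexp_I_mul _), ← integral_const_mul]
    refine setIntegral_congr_fun measurableSet_Ioi fun x _ => ?_
    rw [show I * ((z / T : ℝ) : ℂ) * x = I * z * x / T by push_cast; ring]
    simp only [ofReal_zero, mul_zero, zero_mul, Complex.exp_zero]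
    ring
  have hlim : I * z * ∫ x in Ioi 0, x * f x = ∫ x in Ioi 0, (f x : ℂ) * (I * z * x) := by
    rw [← integral_complex_ofReal, ← integral_const_mul]
    refine integral_congr_ae (ae_of_all _ fun x => ?_)
    push_cast
    ring
  simp_rw [hrw, hlim]
  refine tendsto_integral_filter_of_dominated_convergence (fun x => |z| * ‖x * f x‖)
    (Eventually.of_forall fun T => ?_) ?_ (hxf.norm.const_mul _)
    (ae_of_all _ fun x => tendsto_const_nhds.mul (tendsto_mul_cexp_div_sub_one _))
  · have hcont : Continuous fun x : ℝ => (T : ℂ) * (cexp (I * z * x / T) - 1) := by fun_prop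
    exact (continuous_ofReal.comp_aestronglyMeasurable hf.aestronglyMeasurable).mul
      hcont.aestronglyMeasurable
  · filter_upwards [eventually_gt_atTop 0] with T hT
    refine ae_of_all _ fun x => ?_
    have hexp : ‖cexp (I * z * x / T) - 1‖ ≤ |z * x / T| := by
      rw [show I * z * x / T = I * ((z * x / T : ℝ) : ℂ) by push_cast; ring]
      exact Real.norm_exp_I_mul_ofReal_sub_one_le
    calc ‖(f x : ℂ) * (T * (cexp (I * z * x / T) - 1))‖
        = |f x| * (T * ‖cexp (I * z * x / T) - 1‖) := by
          rw [norm_mul, norm_mul, norm_real, norm_real, Real.norm_eq_abs, Real.norm_of_nonneg hT.le]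
      _ ≤ |f x| * (T * |z * x / T|) := by gcongr
      _ = |z| * ‖x * f x‖ := by
          rw [Real.norm_eq_abs, abs_div, abs_of_pos hT, abs_mul, abs_mul]
          field_simp

lemma tendsto_of_tendsto_ofReal_mul_sub {g : ℝ → ℂ} {c d : ℂ}
    (h : Tendsto (fun T : ℝ => (T : ℂ) * (g T - c)) atTop (𝓝 d)) : Tendsto g atTop (𝓝 c) := by
  have hinv : Tendsto (fun T : ℝ => ((T⁻¹ : ℝ) : ℂ)) atTop (𝓝 0) :=
    ofReal_zero ▸ (continuous_ofReal.tendsto 0).comp tendsto_inv_atTop_zero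
  rw [← tendsto_sub_nhds_zero_iff]
  refine (zero_mul d ▸ hinv.mul h).congr' ?_
  filter_upwards [eventually_ne_atTop 0] with T hT
  have hT' : (T : ℂ) ≠ 0 := by exact_mod_cast hT
  push_cast
  field_simp

lemma tendsto_mul_div_mul_one_sub_mul {α L : ℝ → ℂ} {l c : ℂ}
    (hα : Tendsto (fun T : ℝ => (T : ℂ) * (1 - α T)) atTop (𝓝 l))
    (hL : Tendsto (fun T : ℝ => (T : ℂ) * (L T - 1)) atTop (𝓝 c)) (hne : l - c ≠ 0) :
    Tendsto (fun T : ℝ => α T * L T / (T * (1 - α T * L T))) atTop (𝓝 (1 / (l - c))) := by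
  have hα1 : Tendsto α atTop (𝓝 1) :=
    tendsto_of_tendsto_ofReal_mul_sub (hα.neg.congr fun T => by ring)
  have hnum : Tendsto (fun T : ℝ => α T * L T) atTop (𝓝 1) := by
    simpa using hα1.mul (tendsto_of_tendsto_ofReal_mul_sub hL)
  have hden : Tendsto (fun T : ℝ => (T : ℂ) * (1 - α T * L T)) atTop (𝓝 (l - c)) := by
    simpa only [one_mul] using (hα.sub (hα1.mul hL)).congr fun T => by ring
  exact hnum.div hden hne

lemma fourierIoi_exp_neg_mul {b : ℝ} (hb : 0 < b) (z : ℝ) :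
    fourierIoi (fun x => Real.exp (-b * x)) z = 1 / (b - I * z) := by
  have hre : (-b + I * z : ℂ).re < 0 := by simpa using hb
  calc fourierIoi (fun x => Real.exp (-b * x)) z = ∫ x : ℝ in Ioi 0, cexp ((-b + I * z) * x) := by
        refine integral_congr_ae (ae_of_all _ fun x => ?_)
        push_cast
        rw [← Complex.exp_add]
        ring_nf
    _ = 1 / (b - I * z) := by
        rw [integral_exp_mul_complex_Ioi hre, ofReal_zero, mul_zero, Complex.exp_zero,
          show (-b + I * z : ℂ) = -(b - I * z) by ring, div_neg, neg_div, neg_neg]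

theorem psiT_fourier_convergence_general (lam1 : ℝ → ℝ)
    (hnn : ∀ x, 0 ≤ lam1 x)
    (hint : IntegrableOn lam1 (Set.Ioi 0))
    (hnorm : ∫ x in Set.Ioi (0:ℝ), lam1 x = 1)
    (m : ℝ) (hm0 : 0 < m) (hm : (∫ x in Set.Ioi (0:ℝ), x * lam1 x) = m)
    (lam : ℝ) (hlam : 0 < lam)
    (a : ℝ → ℝ) (ha : ∀ T, a T ∈ Set.Ioo (0:ℝ) 1)
    (haT : Tendsto (fun T : ℝ => T * (1 - a T)) atTop (nhds lam))
    (ψ : ℝ → ℝ → ℝ)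
    (hψ : ∀ T x, ψ T x = ∑' k : ℕ, (a T) ^ (k + 1) * sconvPow lam1 k x) :
    ∀ z : ℝ,
      Tendsto (fun T : ℝ =>
          ∫ x in Set.Ioi (0:ℝ), (ψ T (T * x) : ℂ) * Complex.exp (Complex.I * z * x))
        atTop (nhds (1 / ((lam : ℂ) - Complex.I * z * m))) ∧
      (1 : ℂ) / ((lam : ℂ) - Complex.I * z * m) =
        ∫ x in Set.Ioi (0:ℝ),
          ((1 / m) * Real.exp (-(lam / m) * x) : ℂ) * Complex.exp (Complex.I * z * x) := by
  intro z
  have hne : (lam : ℂ) - I * z * m ≠ 0 := fun h => hlam.ne' (by simpa using congrArg re h)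
  refine ⟨?_, ?_⟩
  · have hxm : IntegrableOn (fun x => x * lam1 x) (Ioi 0) :=
      Integrable.of_integral_ne_zero (hm ▸ hm0.ne')
    have hL : Tendsto (fun T : ℝ => (T : ℂ) * (fourierIoi lam1 (z / T) - 1)) atTop
        (𝓝 (I * z * m)) := by
      simpa only [fourierIoi_zero, hnorm, hm, ofReal_one]
        using tendsto_mul_fourierIoi_div_sub_fourierIoi_zero hint hxm z
    have haT' : Tendsto (fun T : ℝ => (T : ℂ) * (1 - a T)) atTop (𝓝 lam) :=
      ((continuous_ofReal.tendsto _).comp haT).congr fun T => by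
        simp only [Function.comp_apply, ofReal_mul, ofReal_sub, ofReal_one]
    refine (tendsto_mul_div_mul_one_sub_mul haT' hL hne).congr' ?_
    filter_upwards [eventually_gt_atTop 0] with T hT
    change _ = fourierIoi (fun x => ψ T (T * x)) z
    rw [fourierIoi_comp_mul_left _ hT, funext (hψ T), fourierIoi_tsum_pow_mul_sconvPow
      (fun x _ => hnn x) hint hnorm (ha T).1.le (ha T).2, div_mul_eq_div_div_swap, div_eq_inv_mul,
      ofReal_inv]
  · have hm' : (m : ℂ) ≠ 0 := by exact_mod_cast hm0.ne'
    simp_rw [mul_assoc (1 / (m : ℂ))]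
    rw [integral_const_mul, ← fourierIoi, fourierIoi_exp_neg_mul (div_pos hlam hm0),
      show ((lam / m : ℝ) : ℂ) - I * z = (lam - I * z * m) / m by push_cast; field_simp]
    field_simp

/-- in the light-tail nearly unstable regime (T(1−a_T) → λ > 0,
‖λ₁‖₁ = 1, first moment m), the Fourier transform of x ↦ ψ₁^T(Tx) converges
pointwise to 1/(λ − izm), the Fourier transform of x ↦ (1/m) e^{−(λ/m)x} on ℝ₊. -/
theorem psiT_fourier_convergence (lam1 : ℝ → ℝ)
    (hnn : ∀ x, 0 ≤ lam1 x) (hsupp : ∀ x < (0:ℝ), lam1 x = 0)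
    (hmeas : Measurable lam1)
    (hint : IntegrableOn lam1 (Set.Ioi 0))
    (hnorm : ∫ x in Set.Ioi (0:ℝ), lam1 x = 1)
    (m : ℝ) (hm0 : 0 < m) (hm : (∫ x in Set.Ioi (0:ℝ), x * lam1 x) = m)
    (lam : ℝ) (hlam : 0 < lam)
    (a : ℝ → ℝ) (ha : ∀ T, a T ∈ Set.Ioo (0:ℝ) 1)
    (haT : Tendsto (fun T : ℝ => T * (1 - a T)) atTop (nhds lam))
    (ψ : ℝ → ℝ → ℝ)
    (hψ : ∀ T x, ψ T x = ∑' k : ℕ, (a T) ^ (k + 1) * sconvPow lam1 k x) :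
    ∀ z : ℝ,
      Tendsto (fun T : ℝ =>
          ∫ x in Set.Ioi (0:ℝ), (ψ T (T * x) : ℂ) * Complex.exp (Complex.I * z * x))
        atTop (nhds (1 / ((lam : ℂ) - Complex.I * z * m))) ∧
      (1 : ℂ) / ((lam : ℂ) - Complex.I * z * m) =
        ∫ x in Set.Ioi (0:ℝ),
          ((1 / m) * Real.exp (-(lam / m) * x) : ℂ) * Complex.exp (Complex.I * z * x) :=
  psiT_fourier_convergence_general lam1 hnn hint hnorm m hm0 hm lam hlam a ha haT ψ hψ
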